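/- Let f be a real transcendental entire function, L = f′/f, T(z) = tan z, F = (T·L − 1)/(L + T), and for a ∈ ℂ ∖ ℝ set s_a = T·(F − a)/(T − F). Then s_a satisfies the identity s_a(z) = (sin²z − a·cos z·sin z)·L(z) − cos z·sin z − a·sin²z as meromorphic functions on ℂ. Moreover, if f and f″ + f each have only finitely many non-real zeros, then s_a has only finitely many poles in the open upper half-plane H. -/

import Mathlib

open Complex Set Filter MeasureTheory Topology
open scoped ENNReal

noncomputable section

/-- The open upper half-plane, as a subset of `ℂ`. -/
def UHP : Set ℂ := {z : ℂ | 0 < z.im}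

/-- A real entire function: entire, mapping `ℝ` into `ℝ`. -/
def RealEntire (f : ℂ → ℂ) : Prop :=
  Differentiable ℂ f ∧ ∀ x : ℝ, (f (x : ℂ)).im = 0

/-- A function is transcendental if it is not a polynomial. -/
def TranscendentalFun (f : ℂ → ℂ) : Prop :=
  ¬ ∃ p : Polynomial ℂ, ∀ z : ℂ, f z = p.eval z

/-- The maximum modulus `M(r, f)`. -/
def maxMod (f : ℂ → ℂ) (r : ℝ) : ℝ :=
  sSup ((fun z => ‖f z‖) '' Metric.sphere (0 : ℂ) r)

/-- `f` has infinite order: `limsup (log log M(r,f)) / log r = ∞`. -/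
def InfiniteOrder (f : ℂ → ℂ) : Prop :=
  ∀ c r₀ : ℝ, ∃ r : ℝ, r₀ ≤ r ∧ c * Real.log r < Real.log (Real.log (maxMod f r))

/-- `f` has only finitely many non-real zeros. -/
def FinitelyManyNonRealZeros (f : ℂ → ℂ) : Prop :=
  {z : ℂ | z.im ≠ 0 ∧ f z = 0}.Finite

open Classical in
/-- The order of a meromorphic function at a point (junk value `0` if not meromorphic there). -/
def merOrder (g : ℂ → ℂ) (z : ℂ) : WithTop ℤ :=
  if h : MeromorphicAt g z then meromorphicOrderAt g z else 0

/-- Multiplicity of `z` as a zero of `g` (0 if not a zero). -/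
def zeroMult (g : ℂ → ℂ) (z : ℂ) : ℕ := ((merOrder g z).untopD 0).toNat

/-- Multiplicity of `z` as a pole of `g` (0 if not a pole). -/
def poleMult (g : ℂ → ℂ) (z : ℂ) : ℕ := (-((merOrder g z).untopD 0)).toNat

/-- `g` has a pole at `z`. -/
def IsPoleAt (g : ℂ → ℂ) (z : ℂ) : Prop := MeromorphicAt g z ∧ merOrder g z < 0

/-- The Weierstrass primary factor `E_q(w)`. -/
def weierstrassE (q : ℕ) (w : ℂ) : ℂ :=
  (1 - w) * Complex.exp (∑ k ∈ Finset.range q, w ^ (k + 1) / ((k : ℂ) + 1))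

/-- A real entire function with only real zeros, of genus at most `2p+1`,
written in Hadamard product form. -/
def GenusForm (p : ℕ) (g : ℂ → ℂ) : Prop :=
  ∃ (c : ℝ) (μ : ℕ) (Q : Polynomial ℝ) (q : ℕ) (ι : Type) (a : ι → ℝ),
    Countable ι ∧ c ≠ 0 ∧ Q.natDegree ≤ 2 * p + 1 ∧ q ≤ 2 * p + 1 ∧
    (∀ i, a i ≠ 0) ∧ Summable (fun i => |a i| ^ (-((q : ℝ) + 1))) ∧
    ∀ z : ℂ, g z = (c : ℂ) * z ^ μ * Complex.exp ((Q.map (algebraMap ℝ ℂ)).eval z) *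
      ∏' i, weierstrassE q (z / (a i : ℂ))

/-- The class `V_{2p}`. -/
def VClass (p : ℕ) : Set (ℂ → ℂ) :=
  {f | ∃ (a : ℝ) (g : ℂ → ℂ), 0 ≤ a ∧ Differentiable ℂ g ∧ GenusForm p g ∧
    ∀ z : ℂ, f z = g z * Complex.exp (-(a : ℂ) * z ^ (2 * p + 2))}

/-- The class `U_{2p}`: `U_0 = V_0`, `U_{2p} = V_{2p} \ V_{2p-2}` for `p ≥ 1`. -/
def UClass (p : ℕ) : Set (ℂ → ℂ) :=
  if p = 0 then VClass 0 else VClass p \ VClass (p - 1)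

/-- The class `U_{2p}^*`: functions `f = P·h` with `h ∈ U_{2p}` and `P` a real
polynomial without real zeros. -/
def UStarClass (p : ℕ) : Set (ℂ → ℂ) :=
  {f | ∃ (P : Polynomial ℝ) (h : ℂ → ℂ), (∀ x : ℝ, P.eval x ≠ 0) ∧ h ∈ UClass p ∧
    ∀ z : ℂ, f z = (P.map (algebraMap ℝ ℂ)).eval z * h z}

/-- Positive part of the logarithm. -/
def posLog (x : ℝ) : ℝ := max (Real.log x) 0

/-- `𝔫(t, g)`: number of poles of `g`, with multiplicity, in `{z : |z - it/2| ≤ t/2, |z| ≥ 1}`. -/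
def tsujiSmalln (g : ℂ → ℂ) (t : ℝ) : ℝ :=
  ∑' z : {z : ℂ | ‖z - Complex.I * (t / 2)‖ ≤ t / 2 ∧ 1 ≤ ‖z‖},
    (poleMult g z : ℝ)

/-- `𝔑(r, g)`. -/
def tsujiBigN (g : ℂ → ℂ) (r : ℝ) : ℝ :=
  ∫ t in (1 : ℝ)..r, tsujiSmalln g t / t ^ 2

/-- `𝔪(r, g)`. -/
def tsujiM (g : ℂ → ℂ) (r : ℝ) : ℝ :=
  (2 * Real.pi)⁻¹ * ∫ θ in Real.arcsin (1 / r)..(Real.pi - Real.arcsin (1 / r)),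
    posLog ‖g ((r * Real.sin θ : ℝ) * Complex.exp (θ * Complex.I))‖ /
      (r * Real.sin θ ^ 2)

/-- The Tsuji characteristic `𝔗(r, g) = 𝔪(r, g) + 𝔑(r, g)`. -/
def tsujiT (g : ℂ → ℂ) (r : ℝ) : ℝ := tsujiM g r + tsujiBigN g r

/-- `𝔗(r, g) = O(log r)` as `r → ∞`. -/
def TsujiLogBounded (g : ℂ → ℂ) : Prop :=
  ∃ C r₀ : ℝ, ∀ r : ℝ, r₀ ≤ r → tsujiT g r ≤ C * Real.log r

/-- `g` has at least `n` zeros, counted with multiplicity, in the set `S`. -/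
def ZerosAtLeast (g : ℂ → ℂ) (S : Set ℂ) (n : ℕ) : Prop :=
  ∃ (zs : Finset ℂ) (m : ℂ → ℕ),
    (↑zs : Set ℂ) ⊆ S ∧
    (∀ z ∈ zs, 1 ≤ m z ∧ ∀ k < m z, iteratedDeriv k g z = 0) ∧
    n ≤ ∑ z ∈ zs, m z

/-- The logarithmic derivative `L = f'/f`. -/
def Lfun (f : ℂ → ℂ) : ℂ → ℂ := fun z => deriv f z / f z

/-- The auxiliary function `F = (T·L − 1)/(L + T)`, `T = tan`. -/
def Ffun (f : ℂ → ℂ) : ℂ → ℂ := fun z =>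
  (Complex.tan z * Lfun f z - 1) / (Lfun f z + Complex.tan z)

/-- The auxiliary function `s_a = T·(F − a)/(T − F)`. -/
def sfun (f : ℂ → ℂ) (a : ℂ) : ℂ → ℂ := fun z =>
  Complex.tan z * (Ffun f z - a) / (Complex.tan z - Ffun f z)

/-!
Writing `T = sin / cos`, one has `F = (sin·L − cos)/(cos·L + sin)` and
`T − F = 1/(cos·(cos·L + sin))` because `sin² + cos² = 1`; multiplying out gives the identity.
In `H` neither `sin` nor `cos` vanishes, and `cos·L + sin = (cos·f′ + sin·f)/f`. So near a
point of `H` where `f ≠ 0`, either `cos·f′ + sin·f` vanishes identically and `s_a = −a`, or it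
vanishes only at isolated points and `s_a` agrees off them with the right-hand side of the
identity, which is analytic there. Hence every pole of `s_a` in `H` is a non-real zero of `f`.
-/

namespace Complex

theorem cos_ne_zero_of_im_ne_zero {z : ℂ} (hz : z.im ≠ 0) : cos z ≠ 0 :=
  cos_ne_zero_iff.mpr fun k hk => hz (by simp [hk])

theorem sin_ne_zero_of_im_ne_zero {z : ℂ} (hz : z.im ≠ 0) : sin z ≠ 0 :=
  sin_ne_zero_iff.mpr fun k hk => hz (by simp [hk])

end Complex

theorem IsPoleAt.meromorphicOrderAt_neg {g : ℂ → ℂ} {z : ℂ} (h : IsPoleAt g z) :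
    meromorphicOrderAt g z < 0 := by
  obtain ⟨hmer, hord⟩ := h
  rwa [merOrder, dif_pos hmer] at hord

theorem meromorphicOrderAt_nonneg_of_eventuallyEq_analyticAt {g G : ℂ → ℂ} {z : ℂ}
    (hG : AnalyticAt ℂ G z) (hgG : g =ᶠ[𝓝[≠] z] G) : 0 ≤ meromorphicOrderAt g z :=
  meromorphicOrderAt_congr hgG ▸ hG.meromorphicOrderAt_nonneg

theorem mobius_identity_of_sq_add_sq_eq_one (s c l a : ℂ) (hc : c ≠ 0) (hD : c * l + s ≠ 0)
    (hsc : s ^ 2 + c ^ 2 = 1) :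
    s / c * ((s / c * l - 1) / (l + s / c) - a) / (s / c - (s / c * l - 1) / (l + s / c)) =
      (s ^ 2 - a * c * s) * l - c * s - a * s ^ 2 := by
  have hF : (s / c * l - 1) / (l + s / c) = (s * l - c) / (c * l + s) := by
    field_simp
  have hTF : s / c - (s * l - c) / (c * l + s) = 1 / (c * (c * l + s)) := by
    field_simp
    linear_combination hsc
  rw [hF, hTF]
  field_simp
  ring

section SFun

variable {f : ℂ → ℂ} {z : ℂ}

theorem Lfun_add_tan_eq (hf : f z ≠ 0) (hc : cos z ≠ 0) :
    Lfun f z + tan z = (cos z * deriv f z + sin z * f z) / (f z * cos z) := by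
  rw [Lfun, tan_eq_sin_div_cos, div_add_div _ _ hf hc]
  ring

theorem Lfun_add_tan_eq_zero_iff (hf : f z ≠ 0) (hc : cos z ≠ 0) :
    Lfun f z + tan z = 0 ↔ cos z * deriv f z + sin z * f z = 0 := by
  rw [Lfun_add_tan_eq hf hc, div_eq_zero_iff, or_iff_left (mul_ne_zero hf hc)]

theorem sfun_eq_neg_of_Lfun_add_tan_eq_zero (a : ℂ) (hT : tan z ≠ 0)
    (hLT : Lfun f z + tan z = 0) : sfun f a z = -a := by
  simp only [sfun, Ffun, hLT, div_zero, zero_sub, sub_zero]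
  field_simp

theorem sfun_eq (a : ℂ) (hc : cos z ≠ 0) (hLT : Lfun f z + tan z ≠ 0) :
    sfun f a z = (sin z ^ 2 - a * cos z * sin z) * Lfun f z - cos z * sin z - a * sin z ^ 2 := by
  have hD : cos z * Lfun f z + sin z ≠ 0 := by
    have h : cos z * Lfun f z + sin z = cos z * (Lfun f z + tan z) := by
      rw [tan_eq_sin_div_cos]
      field_simp
    exact h ▸ mul_ne_zero hc hLT
  simp only [sfun, Ffun, tan_eq_sin_div_cos]
  exact mobius_identity_of_sq_add_sq_eq_one _ _ _ a hc hD (sin_sq_add_cos_sq z)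

theorem meromorphicOrderAt_sfun_nonneg (hf : Differentiable ℂ f) (a : ℂ) (hz : z.im ≠ 0)
    (hfz : f z ≠ 0) : 0 ≤ meromorphicOrderAt (sfun f a) z := by
  have hf_ne : ∀ᶠ w in 𝓝 z, f w ≠ 0 := hf.continuous.continuousAt.eventually_ne hfz
  have hcos_ne : ∀ᶠ w in 𝓝 z, cos w ≠ 0 :=
    continuous_cos.continuousAt.eventually_ne (cos_ne_zero_of_im_ne_zero hz)
  have hsin_ne : ∀ᶠ w in 𝓝 z, sin w ≠ 0 :=
    continuous_sin.continuousAt.eventually_ne (sin_ne_zero_of_im_ne_zero hz)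
  have hAf : AnalyticAt ℂ f z := hf.analyticAt z
  have hAf' : AnalyticAt ℂ (deriv f) z := hAf.deriv
  have hAnum : AnalyticAt ℂ (fun w => cos w * deriv f w + sin w * f w) z := by fun_prop
  rcases hAnum.eventually_eq_zero_or_eventually_ne_zero with hnum | hnum
  · refine meromorphicOrderAt_nonneg_of_eventuallyEq_analyticAt (G := fun _ => -a)
      analyticAt_const (Filter.EventuallyEq.filter_mono ?_ nhdsWithin_le_nhds)
    filter_upwards [hf_ne, hcos_ne, hsin_ne, hnum] with w hfw hcw hsw hnumw
    have hT : tan w ≠ 0 := by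
      rw [tan_eq_sin_div_cos]
      exact div_ne_zero hsw hcw
    exact sfun_eq_neg_of_Lfun_add_tan_eq_zero a hT ((Lfun_add_tan_eq_zero_iff hfw hcw).mpr hnumw)
  · have hAL : AnalyticAt ℂ (Lfun f) z := hAf'.div hAf hfz
    refine meromorphicOrderAt_nonneg_of_eventuallyEq_analyticAt
      (G := fun w => (sin w ^ 2 - a * cos w * sin w) * Lfun f w - cos w * sin w - a * sin w ^ 2)
      (by fun_prop) ?_
    filter_upwards [nhdsWithin_le_nhds hf_ne, nhdsWithin_le_nhds hcos_ne, hnum]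
      with w hfw hcw hnumw
    exact sfun_eq a hcw ((Lfun_add_tan_eq_zero_iff hfw hcw).not.mpr hnumw)

end SFun

theorem stmt15_general (f : ℂ → ℂ) (hre : RealEntire f)
    (a : ℂ) :
    (∀ z : ℂ, Complex.cos z ≠ 0 → f z ≠ 0 → Lfun f z + Complex.tan z ≠ 0 →
      sfun f a z = (Complex.sin z ^ 2 - a * Complex.cos z * Complex.sin z) * Lfun f z -
        Complex.cos z * Complex.sin z - a * Complex.sin z ^ 2) ∧
    (FinitelyManyNonRealZeros f →
      FinitelyManyNonRealZeros (fun z => deriv (deriv f) z + f z) →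
      {z : ℂ | 0 < z.im ∧ IsPoleAt (sfun f a) z}.Finite) := by
  refine ⟨fun z hc _ hLT => sfun_eq a hc hLT, fun hzeros _ => hzeros.subset ?_⟩
  rintro z ⟨him, hpole⟩
  refine ⟨him.ne', by_contra fun hfz => ?_⟩
  exact (meromorphicOrderAt_sfun_nonneg hre.1 a him.ne' hfz).not_gt hpole.meromorphicOrderAt_neg

theorem stmt15 (f : ℂ → ℂ) (hre : RealEntire f) (htr : TranscendentalFun f)
    (a : ℂ) (ha : a.im ≠ 0) :
    (∀ z : ℂ, Complex.cos z ≠ 0 → f z ≠ 0 → Lfun f z + Complex.tan z ≠ 0 →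
      sfun f a z = (Complex.sin z ^ 2 - a * Complex.cos z * Complex.sin z) * Lfun f z -
        Complex.cos z * Complex.sin z - a * Complex.sin z ^ 2) ∧
    (FinitelyManyNonRealZeros f →
      FinitelyManyNonRealZeros (fun z => deriv (deriv f) z + f z) →
      {z : ℂ | 0 < z.im ∧ IsPoleAt (sfun f a) z}.Finite) :=
  stmt15_general f hre a

end
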